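/- Let α > 0 and c > 0 be real constants. There exists a unique twice continuously differentiable function φ : [0, ∞) → ℝ with φ(0) = 0, φ'(0) = 1, 1 + 2cα·φ'(s) > 0 for all s ≥ 0, and φ''(s) = (φ(s)/α)·(1 − √(1 + 2cα·φ'(s))) for all s ≥ 0. This solution satisfies φ(s) > 0 and 0 < φ'(s) ≤ 1 for all s > 0. -/

import Mathlib

/-- `φ` is a twice continuously differentiable global solution on `[0, ∞)` of
the RG-2 cigar soliton ODE `φ'' = (φ/α)(1 − √(1 + 2cα·φ'))` with `φ(0) = 0`,
`φ'(0) = 1` and `1 + 2cα·φ' > 0`. -/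
def IsGlobalCigarSolution (α c : ℝ) (φ : ℝ → ℝ) : Prop :=
  φ 0 = 0 ∧ derivWithin φ (Set.Ici 0) 0 = 1 ∧
  (∀ s ∈ Set.Ici (0 : ℝ),
    HasDerivWithinAt φ (derivWithin φ (Set.Ici 0) s) (Set.Ici 0) s) ∧
  (∀ s ∈ Set.Ici (0 : ℝ),
    HasDerivWithinAt (derivWithin φ (Set.Ici 0))
      (φ s / α * (1 - Real.sqrt (1 + 2 * c * α * derivWithin φ (Set.Ici 0) s)))
      (Set.Ici 0) s) ∧
  ContinuousOn
    (fun s => φ s / α * (1 - Real.sqrt (1 + 2 * c * α * derivWithin φ (Set.Ici 0) s)))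
    (Set.Ici 0) ∧
  (∀ s ∈ Set.Ici (0 : ℝ), 0 < 1 + 2 * c * α * derivWithin φ (Set.Ici 0) s)

/-!
Writing `w = √(1 + 2cαφ')`, the equation reads `w' = cφ(1 - w)/w`, so `F w + c²αφ²` with
`F w = w³/3 + w²/2` is conserved along solutions. Solving this first integral for `w` turns the
problem into the autonomous equation `φ' = V φ` with `V` locally Lipschitz, whence uniqueness.
For existence, `V` is positive on `(-uStar, uStar)` and vanishes at `±uStar`, so
`S u = ∫₀ᵘ dt / V t` diverges logarithmically there and is an increasing bijection
`(-uStar, uStar) → ℝ`; its inverse solves `φ' = V φ`, is increasing, and has `0 < φ' ≤ 1`.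
-/

open Set Function Filter Topology

namespace StrictMonoOn

variable {f : ℝ → ℝ} {I : Set ℝ}

theorem strictMono_invFunOn (hf : StrictMonoOn f I) (hsurj : SurjOn f I univ) :
    StrictMono (invFunOn f I) := fun x y hxy => by
  have hmaps := hsurj.mapsTo_invFunOn
  have hinv := hsurj.rightInvOn_invFunOn
  rwa [← hf.lt_iff_lt (hmaps (mem_univ x)) (hmaps (mem_univ y)), hinv (mem_univ x),
    hinv (mem_univ y)]

theorem continuous_invFunOn (hf : StrictMonoOn f I) (hsurj : SurjOn f I univ) (hI : IsOpen I) :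
    Continuous (invFunOn f I) := by
  have himage : invFunOn f I '' univ = I := by
    rw [← univ_subset_iff.1 hsurj, hf.injOn.invFunOn_image subset_rfl]
  refine continuous_iff_continuousAt.2 fun y => continuousAt_of_monotoneOn_of_image_mem_nhds
    ((hf.strictMono_invFunOn hsurj).monotone.monotoneOn univ) univ_mem ?_
  rw [himage]
  exact hI.mem_nhds (hsurj.mapsTo_invFunOn (mem_univ y))

theorem hasDerivAt_invFunOn (hf : StrictMonoOn f I) (hsurj : SurjOn f I univ) (hI : IsOpen I)
    {f' y : ℝ} (hderiv : HasDerivAt f f' (invFunOn f I y)) (hf' : f' ≠ 0) :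
    HasDerivAt (invFunOn f I) f'⁻¹ y :=
  hderiv.of_local_left_inverse (hf.continuous_invFunOn hsurj hI).continuousAt hf'
    (Eventually.of_forall fun z => hsurj.rightInvOn_invFunOn (mem_univ z))

end StrictMonoOn

theorem mul_sq_lt_of_mem_Ioo_sqrt {k a u : ℝ} (hk : 0 < k)
    (hu : u ∈ Ioo (-√(a / k)) √(a / k)) : k * u ^ 2 < a := by
  have hpos : 0 < a / k := Real.sqrt_pos.1 (by linarith [hu.1, hu.2])
  have hsq := sq_lt_sq' hu.1 hu.2
  rw [Real.sq_sqrt hpos.le, lt_div_iff₀ hk] at hsq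
  linarith

noncomputable section

namespace RG2Cigar

def F (w : ℝ) : ℝ := w ^ 3 / 3 + w ^ 2 / 2

theorem hasDerivAt_F (w : ℝ) : HasDerivAt F (w ^ 2 + w) w := by
  refine (((hasDerivAt_pow 3 w).div_const 3).add ((hasDerivAt_pow 2 w).div_const 2)).congr_deriv ?_
  push_cast; ring

theorem strictMonoOn_F : StrictMonoOn F (Ici 0) := by
  refine strictMonoOn_of_hasDerivWithinAt_pos (convex_Ici 0)
    (fun w _ => (hasDerivAt_F w).continuousAt.continuousWithinAt)
    (fun w _ => (hasDerivAt_F w).hasDerivWithinAt) fun w hw => ?_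
  rw [interior_Ici, mem_Ioi] at hw
  positivity

theorem F_nonneg {w : ℝ} (hw : 0 ≤ w) : 0 ≤ F w := by
  unfold F; positivity

/-- A strictly monotone bijection of `ℝ` agreeing with `F` on `[0, ∞)`, so that its inverse
`Finv` inverts `F` there. -/
def Fext (w : ℝ) : ℝ := F (max w 0) + min w 0

theorem Fext_of_nonneg {w : ℝ} (hw : 0 ≤ w) : Fext w = F w := by
  simp [Fext, hw]

theorem strictMono_Fext : StrictMono Fext := by
  intro x y hxy
  rcases le_or_gt 0 x with hx | hx
  · rw [Fext_of_nonneg hx, Fext_of_nonneg (hx.trans hxy.le)]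
    exact strictMonoOn_F hx (hx.trans hxy.le) hxy
  · have hFx : Fext x = x := by simp [Fext, hx.le, F]
    rcases le_or_gt 0 y with hy | hy
    · rw [hFx, Fext_of_nonneg hy]
      linarith [F_nonneg hy]
    · rwa [hFx, show Fext y = y by simp [Fext, hy.le, F]]

theorem continuous_Fext : Continuous Fext := by
  unfold Fext F; fun_prop

theorem surjective_Fext : Surjective Fext := by
  refine continuous_Fext.surjective (tendsto_atTop_mono' _ ?_ tendsto_id)
    (tendsto_atBot_mono' _ ?_ tendsto_id)
  · filter_upwards [eventually_ge_atTop 2] with w hw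
    rw [Fext_of_nonneg (by linarith), F, id]
    nlinarith [pow_nonneg (by linarith : (0 : ℝ) ≤ w) 3]
  · filter_upwards [eventually_le_atBot 0] with w hw
    simp [Fext, hw, F]

def Finv : ℝ → ℝ := invFunOn Fext univ

theorem Finv_F {w : ℝ} (hw : 0 ≤ w) : Finv (F w) = w := by
  rw [← Fext_of_nonneg hw]
  exact strictMono_Fext.injective.injOn.leftInvOn_invFunOn (mem_univ w)

theorem strictMono_Finv : StrictMono Finv :=
  (strictMono_Fext.strictMonoOn univ).strictMono_invFunOn surjective_Fext.surjOn

theorem continuous_Finv : Continuous Finv :=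
  (strictMono_Fext.strictMonoOn univ).continuous_invFunOn surjective_Fext.surjOn isOpen_univ

theorem Finv_zero : Finv 0 = 0 := by
  simpa [F] using Finv_F le_rfl

theorem Finv_pos {t : ℝ} (ht : 0 < t) : 0 < Finv t := by
  simpa [Finv_zero] using strictMono_Finv ht

theorem hasDerivAt_Finv {t : ℝ} (ht : 0 < t) : HasDerivAt Finv (Finv t ^ 2 + Finv t)⁻¹ t := by
  have hFext : HasDerivAt Fext (Finv t ^ 2 + Finv t) (Finv t) :=
    (hasDerivAt_F _).congr_of_eventuallyEq <| by
      filter_upwards [eventually_gt_nhds (Finv_pos ht)] with w hw using Fext_of_nonneg hw.le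
  have hpos := Finv_pos ht
  exact (strictMono_Fext.strictMonoOn univ).hasDerivAt_invFunOn surjective_Fext.surjOn isOpen_univ
    hFext (by positivity)

variable {α c : ℝ}

def w₀ (α c : ℝ) : ℝ := √(1 + 2 * c * α)

def E (α c : ℝ) : ℝ := F (w₀ α c)

/-- The first integral `F w + c²αφ² = E` solved for `w = √(1 + 2cαφ')`: on a solution
`w = G φ`, hence `φ' = V φ`. -/
def G (α c u : ℝ) : ℝ := Finv (E α c - c ^ 2 * α * u ^ 2)

def V (α c u : ℝ) : ℝ := (G α c u ^ 2 - 1) / (2 * c * α)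

/-- The limit of the profile as `s → ∞`, i.e. the radius of the cigar. -/
def uStar (α c : ℝ) : ℝ := √((E α c - F 1) / (c ^ 2 * α))

def uMax (α c : ℝ) : ℝ := √(E α c / (c ^ 2 * α))

theorem w₀_nonneg : 0 ≤ w₀ α c := Real.sqrt_nonneg _

theorem w₀_sq (hα : 0 < α) (hc : 0 < c) : w₀ α c ^ 2 = 1 + 2 * c * α :=
  Real.sq_sqrt (by positivity)

theorem one_lt_w₀ (hα : 0 < α) (hc : 0 < c) : 1 < w₀ α c := by
  rw [w₀, Real.lt_sqrt zero_le_one]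
  nlinarith [mul_pos hc hα]

theorem F_one_lt_E (hα : 0 < α) (hc : 0 < c) : F 1 < E α c :=
  strictMonoOn_F (zero_le_one' ℝ) w₀_nonneg (one_lt_w₀ hα hc)

theorem uStar_pos (hα : 0 < α) (hc : 0 < c) : 0 < uStar α c :=
  Real.sqrt_pos.2 (div_pos (sub_pos.2 (F_one_lt_E hα hc)) (by positivity))

theorem uStar_lt_uMax (hα : 0 < α) (hc : 0 < c) : uStar α c < uMax α c := by
  refine Real.sqrt_lt_sqrt (div_pos (sub_pos.2 (F_one_lt_E hα hc)) (by positivity)).le ?_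
  gcongr
  norm_num [F]

theorem uMax_pos (hα : 0 < α) (hc : 0 < c) : 0 < uMax α c :=
  (uStar_pos hα hc).trans (uStar_lt_uMax hα hc)

theorem Ioo_uStar_subset_Ioo_uMax (hα : 0 < α) (hc : 0 < c) :
    Ioo (-uStar α c) (uStar α c) ⊆ Ioo (-uMax α c) (uMax α c) :=
  Ioo_subset_Ioo (neg_le_neg (uStar_lt_uMax hα hc).le) (uStar_lt_uMax hα hc).le

theorem G_zero : G α c 0 = w₀ α c := by
  simpa [G, E] using Finv_F (w₀_nonneg (α := α) (c := c))

theorem V_zero (hα : 0 < α) (hc : 0 < c) : V α c 0 = 1 := by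
  rw [V, G_zero, w₀_sq hα hc]
  field_simp
  ring

theorem V_neg (u : ℝ) : V α c (-u) = V α c u := by
  simp [V, G]

theorem G_le_w₀ (hα : 0 < α) (u : ℝ) : G α c u ≤ w₀ α c := by
  calc G α c u ≤ Finv (E α c) := strictMono_Finv.monotone (by nlinarith [sq_nonneg (c * u)])
    _ = w₀ α c := Finv_F w₀_nonneg

theorem G_pos (hα : 0 < α) (hc : 0 < c) {u : ℝ} (hu : u ∈ Ioo (-uMax α c) (uMax α c)) :
    0 < G α c u :=
  Finv_pos (sub_pos.2 (mul_sq_lt_of_mem_Ioo_sqrt (by positivity) hu))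

theorem one_lt_G (hα : 0 < α) (hc : 0 < c) {u : ℝ} (hu : u ∈ Ioo (-uStar α c) (uStar α c)) :
    1 < G α c u := by
  have h := mul_sq_lt_of_mem_Ioo_sqrt (by positivity) hu
  simpa only [G, Finv_F zero_le_one] using strictMono_Finv (show F 1 < _ by linarith)

theorem G_uStar (hα : 0 < α) (hc : 0 < c) : G α c (uStar α c) = 1 := by
  have hsq : uStar α c ^ 2 = (E α c - F 1) / (c ^ 2 * α) :=
    Real.sq_sqrt (div_pos (sub_pos.2 (F_one_lt_E hα hc)) (by positivity)).le
  rw [G, hsq, mul_div_cancel₀ _ (by positivity), sub_sub_cancel, Finv_F zero_le_one]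

theorem V_uStar (hα : 0 < α) (hc : 0 < c) : V α c (uStar α c) = 0 := by
  simp [V, G_uStar hα hc]

theorem V_pos (hα : 0 < α) (hc : 0 < c) {u : ℝ} (hu : u ∈ Ioo (-uStar α c) (uStar α c)) :
    0 < V α c u := by
  have h := one_lt_G hα hc hu
  exact div_pos (by nlinarith) (by positivity)

theorem V_le_one (hα : 0 < α) (hc : 0 < c) {u : ℝ} (hu : u ∈ Ioo (-uMax α c) (uMax α c)) :
    V α c u ≤ 1 := by
  have h := G_pos hα hc hu
  have h' := G_le_w₀ (c := c) hα u
  rw [V, div_le_one (by positivity)]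
  nlinarith [w₀_sq hα hc]

theorem sqrt_one_add_V (hα : 0 < α) (hc : 0 < c) {u : ℝ}
    (hu : u ∈ Ioo (-uMax α c) (uMax α c)) : √(1 + 2 * c * α * V α c u) = G α c u := by
  rw [V, mul_div_cancel₀ _ (by positivity), add_sub_cancel, Real.sqrt_sq (G_pos hα hc hu).le]

theorem hasDerivAt_G (hα : 0 < α) (hc : 0 < c) {u : ℝ}
    (hu : u ∈ Ioo (-uMax α c) (uMax α c)) :
    HasDerivAt (G α c) ((G α c u ^ 2 + G α c u)⁻¹ * -(2 * c ^ 2 * α * u)) u := by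
  have hinner : HasDerivAt (fun u => E α c - c ^ 2 * α * u ^ 2) (-(2 * c ^ 2 * α * u)) u := by
    refine ((hasDerivAt_pow 2 u).const_mul (c ^ 2 * α)).const_sub (E α c) |>.congr_deriv ?_
    push_cast; ring
  exact (hasDerivAt_Finv (sub_pos.2 (mul_sq_lt_of_mem_Ioo_sqrt (by positivity) hu))).comp u hinner

theorem hasDerivAt_V (hα : 0 < α) (hc : 0 < c) {u : ℝ}
    (hu : u ∈ Ioo (-uMax α c) (uMax α c)) :
    HasDerivAt (V α c) (-(2 * c * u) / (G α c u + 1)) u := by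
  have hG := G_pos hα hc hu
  refine (((hasDerivAt_G hα hc hu).pow 2).sub_const 1).div_const (2 * c * α) |>.congr_deriv ?_
  field_simp
  ring

theorem continuous_V : Continuous (V α c) := by
  unfold V G
  have := continuous_Finv
  fun_prop

theorem lipschitzOnWith_V (hα : 0 < α) (hc : 0 < c) :
    LipschitzOnWith (2 * c * uMax α c).toNNReal (V α c) (Ioo (-uMax α c) (uMax α c)) := by
  refine (convex_Ioo _ _).lipschitzOnWith_of_nnnorm_hasDerivWithin_le
    (fun u hu => (hasDerivAt_V hα hc hu).hasDerivWithinAt) fun u hu => ?_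
  have hG := G_pos hα hc hu
  have hL : 0 ≤ 2 * c * uMax α c := by have := uMax_pos hα hc; positivity
  rw [← NNReal.coe_le_coe, coe_nnnorm, Real.coe_toNNReal _ hL, Real.norm_eq_abs, abs_div,
    abs_of_pos (by linarith : 0 < G α c u + 1), abs_neg,
    div_le_iff₀ (by linarith), abs_mul, abs_of_pos (by positivity : 0 < 2 * c)]
  calc 2 * c * |u| ≤ 2 * c * uMax α c := by gcongr; exact (abs_lt.2 hu).le
    _ ≤ 2 * c * uMax α c * (G α c u + 1) := le_mul_of_one_le_right hL (by linarith)

theorem V_le_mul_uStar_sub (hα : 0 < α) (hc : 0 < c) {u : ℝ} (hu : u ∈ Icc 0 (uStar α c)) :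
    V α c u ≤ 2 * c * uMax α c * (uStar α c - u) := by
  have hmem : Icc 0 (uStar α c) ⊆ Ioo (-uMax α c) (uMax α c) := fun x hx =>
    ⟨by linarith [hx.1, uMax_pos hα hc], hx.2.trans_lt (uStar_lt_uMax hα hc)⟩
  have h := (lipschitzOnWith_V hα hc).dist_le_mul u (hmem hu) (uStar α c)
    (hmem ⟨(uStar_pos hα hc).le, le_rfl⟩)
  rw [V_uStar hα hc, Real.dist_eq, Real.dist_eq, sub_zero, abs_sub_comm u,
    abs_of_nonneg (sub_nonneg.2 hu.2),
    Real.coe_toNNReal _ (by have := uMax_pos hα hc; positivity)] at h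
  exact (le_abs_self _).trans h

open MeasureTheory intervalIntegral

def S (α c u : ℝ) : ℝ := ∫ t in (0 : ℝ)..u, (V α c t)⁻¹

theorem zero_mem_Ioo_uStar (hα : 0 < α) (hc : 0 < c) :
    (0 : ℝ) ∈ Ioo (-uStar α c) (uStar α c) :=
  ⟨neg_lt_zero.2 (uStar_pos hα hc), uStar_pos hα hc⟩

theorem continuousOn_inv_V (hα : 0 < α) (hc : 0 < c) :
    ContinuousOn (fun t => (V α c t)⁻¹) (Ioo (-uStar α c) (uStar α c)) :=
  continuous_V.continuousOn.inv₀ fun _ ht => (V_pos hα hc ht).ne'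

theorem intervalIntegrable_inv_V (hα : 0 < α) (hc : 0 < c) {u : ℝ}
    (hu : u ∈ Ioo (-uStar α c) (uStar α c)) :
    IntervalIntegrable (fun t => (V α c t)⁻¹) volume 0 u :=
  ((continuousOn_inv_V hα hc).mono
    (ordConnected_Ioo.uIcc_subset (zero_mem_Ioo_uStar hα hc) hu)).intervalIntegrable

theorem hasDerivAt_S (hα : 0 < α) (hc : 0 < c) {u : ℝ}
    (hu : u ∈ Ioo (-uStar α c) (uStar α c)) :
    HasDerivAt (S α c) (V α c u)⁻¹ u :=
  integral_hasDerivAt_right (intervalIntegrable_inv_V hα hc hu)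
    ((continuousOn_inv_V hα hc).stronglyMeasurableAtFilter isOpen_Ioo u hu)
    ((continuousOn_inv_V hα hc).continuousAt (isOpen_Ioo.mem_nhds hu))

theorem S_zero : S α c 0 = 0 := integral_same

theorem S_neg (u : ℝ) : S α c (-u) = -S α c u := by
  have h := integral_comp_neg (a := 0) (b := u) fun t => (V α c t)⁻¹
  simp only [V_neg, neg_zero] at h
  rw [S, S, h, integral_symm]

theorem strictMonoOn_S (hα : 0 < α) (hc : 0 < c) :
    StrictMonoOn (S α c) (Ioo (-uStar α c) (uStar α c)) :=
  strictMonoOn_of_hasDerivWithinAt_pos (convex_Ioo _ _)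
    (fun _ hu => (hasDerivAt_S hα hc hu).continuousAt.continuousWithinAt)
    (fun _ hu => (hasDerivAt_S hα hc (interior_subset hu)).hasDerivWithinAt)
    fun _ hu => inv_pos.2 (V_pos hα hc (interior_subset hu))

theorem log_le_S (hα : 0 < α) (hc : 0 < c) {u : ℝ} (hu : u ∈ Ico 0 (uStar α c)) :
    (2 * c * uMax α c)⁻¹ * Real.log (uStar α c / (uStar α c - u)) ≤ S α c u := by
  have hpos := uStar_pos hα hc
  have hsub : ∀ t ∈ Icc 0 u, 0 < uStar α c - t := fun t ht => by linarith [ht.2, hu.2]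
  calc (2 * c * uMax α c)⁻¹ * Real.log (uStar α c / (uStar α c - u))
      = ∫ t in (0 : ℝ)..u, (2 * c * uMax α c)⁻¹ * (uStar α c - t)⁻¹ := by
        rw [intervalIntegral.integral_const_mul, integral_comp_sub_left (fun t => t⁻¹), sub_zero,
          integral_inv_of_pos (sub_pos.2 hu.2) hpos]
    _ ≤ S α c u := by
        refine integral_mono_on hu.1 (ContinuousOn.intervalIntegrable ?_)
          (intervalIntegrable_inv_V hα hc ⟨by linarith [hu.1], hu.2⟩) fun t ht => ?_
        · rw [uIcc_of_le hu.1]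
          exact continuousOn_const.mul
            ((continuousOn_const.sub continuousOn_id).inv₀ fun t ht => (hsub t ht).ne')
        · rw [← mul_inv]
          exact inv_anti₀ (V_pos hα hc ⟨by linarith [ht.1], by linarith [ht.2, hu.2]⟩)
            (V_le_mul_uStar_sub hα hc ⟨ht.1, by linarith [ht.2, hu.2]⟩)

theorem exists_le_S (hα : 0 < α) (hc : 0 < c) (s : ℝ) :
    ∃ u ∈ Ioo (-uStar α c) (uStar α c), s ≤ S α c u := by
  have hL : 0 < 2 * c * uMax α c := by have := uMax_pos hα hc; positivity
  have hpos := uStar_pos hα hc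
  set m := max s 0
  set ε := Real.exp (-(2 * c * uMax α c * m))
  have hε : ε ≤ 1 := Real.exp_le_one_iff.2 (by nlinarith [le_max_right s 0])
  have hε' : 0 < ε := Real.exp_pos _
  have hu : uStar α c * (1 - ε) ∈ Ico 0 (uStar α c) := ⟨by nlinarith, by nlinarith⟩
  refine ⟨_, ⟨by linarith [hu.1], hu.2⟩, (le_max_left s 0).trans ?_⟩
  have hlog :
      Real.log (uStar α c / (uStar α c - uStar α c * (1 - ε))) = 2 * c * uMax α c * m := by
    rw [show uStar α c - uStar α c * (1 - ε) = uStar α c * ε by ring,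
      div_mul_cancel_left₀ hpos.ne', Real.log_inv, Real.log_exp, neg_neg]
  have := log_le_S hα hc hu
  rwa [hlog, ← mul_assoc, inv_mul_cancel₀ hL.ne', one_mul] at this

theorem surjOn_S (hα : 0 < α) (hc : 0 < c) :
    SurjOn (S α c) (Ioo (-uStar α c) (uStar α c)) univ := by
  have hconn : IsPreconnected (S α c '' Ioo (-uStar α c) (uStar α c)) :=
    isPreconnected_Ioo.image _ fun u hu => (hasDerivAt_S hα hc hu).continuousAt.continuousWithinAt
  rw [SurjOn, univ_subset_iff]
  refine hconn.eq_univ_of_unbounded (not_bddBelow_iff.2 fun x => ?_)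
    (not_bddAbove_iff.2 fun x => ?_)
  · obtain ⟨u, hu, hle⟩ := exists_le_S hα hc (1 - x)
    exact ⟨S α c (-u), mem_image_of_mem _ ⟨by linarith [hu.2], by linarith [hu.1]⟩,
      by rw [S_neg]; linarith⟩
  · obtain ⟨u, hu, hle⟩ := exists_le_S hα hc (x + 1)
    exact ⟨S α c u, mem_image_of_mem _ hu, by linarith⟩

def profile (α c : ℝ) : ℝ → ℝ := invFunOn (S α c) (Ioo (-uStar α c) (uStar α c))

theorem profile_mem (hα : 0 < α) (hc : 0 < c) (s : ℝ) :
    profile α c s ∈ Ioo (-uStar α c) (uStar α c) :=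
  (surjOn_S hα hc).mapsTo_invFunOn (mem_univ s)

theorem profile_mem_Ioo_uMax (hα : 0 < α) (hc : 0 < c) (s : ℝ) :
    profile α c s ∈ Ioo (-uMax α c) (uMax α c) :=
  Ioo_uStar_subset_Ioo_uMax hα hc (profile_mem hα hc s)

theorem profile_zero (hα : 0 < α) (hc : 0 < c) : profile α c 0 = 0 := by
  simpa [profile, S_zero] using
    (strictMonoOn_S hα hc).injOn.leftInvOn_invFunOn (zero_mem_Ioo_uStar hα hc)

theorem strictMono_profile (hα : 0 < α) (hc : 0 < c) : StrictMono (profile α c) :=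
  (strictMonoOn_S hα hc).strictMono_invFunOn (surjOn_S hα hc)

theorem continuous_profile (hα : 0 < α) (hc : 0 < c) : Continuous (profile α c) :=
  (strictMonoOn_S hα hc).continuous_invFunOn (surjOn_S hα hc) isOpen_Ioo

theorem hasDerivAt_profile (hα : 0 < α) (hc : 0 < c) (s : ℝ) :
    HasDerivAt (profile α c) (V α c (profile α c s)) s := by
  have hu := profile_mem hα hc s
  rw [← inv_inv (V α c (profile α c s))]
  exact (strictMonoOn_S hα hc).hasDerivAt_invFunOn (surjOn_S hα hc) isOpen_Ioo
    (hasDerivAt_S hα hc hu) (inv_ne_zero (V_pos hα hc hu).ne')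

theorem hasDerivAt_V_profile (hα : 0 < α) (hc : 0 < c) (s : ℝ) :
    HasDerivAt (fun t => V α c (profile α c t))
      (profile α c s / α * (1 - √(1 + 2 * c * α * V α c (profile α c s)))) s := by
  have hu := profile_mem_Ioo_uMax hα hc s
  refine ((hasDerivAt_V hα hc hu).comp s (hasDerivAt_profile hα hc s)).congr_deriv ?_
  have hG := G_pos hα hc hu
  rw [sqrt_one_add_V hα hc hu, V]
  field_simp
  ring

theorem derivWithin_profile (hα : 0 < α) (hc : 0 < c) {s : ℝ} (hs : s ∈ Ici 0) :
    derivWithin (profile α c) (Ici 0) s = V α c (profile α c s) :=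
  (hasDerivAt_profile hα hc s).hasDerivWithinAt.derivWithin (uniqueDiffOn_Ici 0 s hs)

theorem isGlobalCigarSolution_profile (hα : 0 < α) (hc : 0 < c) :
    IsGlobalCigarSolution α c (profile α c) := by
  have hderiv :
      EqOn (derivWithin (profile α c) (Ici 0)) (fun s => V α c (profile α c s)) (Ici 0) :=
    fun _ hs => derivWithin_profile hα hc hs
  refine ⟨profile_zero hα hc, ?_, fun s hs => ?_, fun s hs => ?_, ?_, fun s hs => ?_⟩
  · rw [hderiv self_mem_Ici]
    simp only [profile_zero hα hc, V_zero hα hc]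
  · rw [hderiv hs]
    exact (hasDerivAt_profile hα hc s).hasDerivWithinAt
  · rw [hderiv hs]
    exact (hasDerivAt_V_profile hα hc s).hasDerivWithinAt.congr hderiv (hderiv hs)
  · refine ContinuousOn.congr ?_ fun s hs => by rw [hderiv hs]
    have := continuous_profile hα hc
    have := continuous_V (α := α) (c := c)
    fun_prop
  · have := V_pos hα hc (profile_mem hα hc s)
    rw [hderiv hs]
    positivity

end RG2Cigar

end

namespace IsGlobalCigarSolution

open RG2Cigar

variable {α c : ℝ} {ψ : ℝ → ℝ}

theorem hasDerivWithinAt (hψ : IsGlobalCigarSolution α c ψ) {s : ℝ} (hs : s ∈ Ici 0) :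
    HasDerivWithinAt ψ (derivWithin ψ (Ici 0) s) (Ici 0) s :=
  hψ.2.2.1 s hs

theorem one_add_mul_derivWithin_pos (hψ : IsGlobalCigarSolution α c ψ) {s : ℝ}
    (hs : s ∈ Ici 0) :
    0 < 1 + 2 * c * α * derivWithin ψ (Ici 0) s :=
  hψ.2.2.2.2.2 s hs

theorem hasDerivWithinAt_energy (hψ : IsGlobalCigarSolution α c ψ) (hα : 0 < α) {s : ℝ}
    (hs : s ∈ Ici 0) :
    HasDerivWithinAt
      (fun t => F √(1 + 2 * c * α * derivWithin ψ (Ici 0) t) + c ^ 2 * α * ψ t ^ 2)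
      0 (Ici 0) s := by
  have hpos := hψ.one_add_mul_derivWithin_pos hs
  have hw2 := Real.sq_sqrt hpos.le
  have hsqrt := (((hψ.2.2.2.1 s hs).const_mul (2 * c * α)).const_add 1).sqrt hpos.ne'
  refine (((hasDerivAt_F _).comp_hasDerivWithinAt s hsqrt).add
    (((hψ.hasDerivWithinAt hs).pow 2).const_mul (c ^ 2 * α))).congr_deriv ?_
  field_simp
  push_cast
  linear_combination (-(c * ψ s)) * hw2

theorem energy_eq (hψ : IsGlobalCigarSolution α c ψ) (hα : 0 < α) {s : ℝ}
    (hs : s ∈ Ici 0) :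
    F √(1 + 2 * c * α * derivWithin ψ (Ici 0) s) + c ^ 2 * α * ψ s ^ 2 = E α c := by
  have hderiv := fun t (ht : t ∈ Ici 0) => hψ.hasDerivWithinAt_energy hα ht
  have hconst := constant_of_has_deriv_right_zero
    (fun t ht => (hderiv t ht.1).continuousWithinAt.mono Icc_subset_Ici_self)
    (fun t ht => (hderiv t ht.1).mono (Ici_subset_Ici.2 ht.1)) s ⟨hs, le_rfl⟩
  rw [hconst, hψ.1, hψ.2.1]
  simp [E, w₀]

theorem sqrt_eq_G (hψ : IsGlobalCigarSolution α c ψ) (hα : 0 < α) {s : ℝ}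
    (hs : s ∈ Ici 0) :
    √(1 + 2 * c * α * derivWithin ψ (Ici 0) s) = G α c (ψ s) := by
  rw [G, ← hψ.energy_eq hα hs, add_sub_cancel_right, Finv_F (Real.sqrt_nonneg _)]

theorem mem_Ioo_uMax (hψ : IsGlobalCigarSolution α c ψ) (hα : 0 < α) (hc : 0 < c) {s : ℝ}
    (hs : s ∈ Ici 0) : ψ s ∈ Ioo (-uMax α c) (uMax α c) := by
  have hF : 0 < F √(1 + 2 * c * α * derivWithin ψ (Ici 0) s) := by
    have := Real.sqrt_pos.2 (hψ.one_add_mul_derivWithin_pos hs)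
    unfold F; positivity
  have := hψ.energy_eq hα hs
  rw [mem_Ioo, ← abs_lt, uMax, Real.lt_sqrt (abs_nonneg _), sq_abs, lt_div_iff₀ (by positivity)]
  linarith

theorem derivWithin_eq_V (hψ : IsGlobalCigarSolution α c ψ) (hα : 0 < α) (hc : 0 < c) {s : ℝ}
    (hs : s ∈ Ici 0) : derivWithin ψ (Ici 0) s = V α c (ψ s) := by
  rw [V, ← hψ.sqrt_eq_G hα hs, Real.sq_sqrt (hψ.one_add_mul_derivWithin_pos hs).le]
  field_simp
  ring

theorem eqOn_profile (hψ : IsGlobalCigarSolution α c ψ) (hα : 0 < α) (hc : 0 < c) :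
    EqOn ψ (profile α c) (Ici 0) := fun _ hs =>
  ODE_solution_unique_of_mem_Icc_right (v := fun _ => V α c)
    (s := fun _ => Ioo (-uMax α c) (uMax α c))
    (fun _ _ => lipschitzOnWith_V hα hc)
    (fun _ ht => (hψ.hasDerivWithinAt ht.1).continuousWithinAt.mono Icc_subset_Ici_self)
    (fun _ ht => hψ.derivWithin_eq_V hα hc ht.1 ▸
      (hψ.hasDerivWithinAt ht.1).mono (Ici_subset_Ici.2 ht.1))
    (fun _ ht => hψ.mem_Ioo_uMax hα hc ht.1)
    (continuous_profile hα hc).continuousOn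
    (fun t _ => (hasDerivAt_profile hα hc t).hasDerivWithinAt)
    (fun t _ => profile_mem_Ioo_uMax hα hc t)
    (hψ.1.trans (profile_zero hα hc).symm) ⟨hs, le_rfl⟩

end IsGlobalCigarSolution

open RG2Cigar

/-- Existence and uniqueness of the RG-2 cigar soliton profile: there is a
unique global solution on `[0, ∞)`, and it satisfies `φ > 0` and `0 < φ' ≤ 1`
on `(0, ∞)`. -/
theorem rg2_cigar_global_existence_uniqueness
    (α c : ℝ) (hα : 0 < α) (hc : 0 < c) :
    (∃ φ : ℝ → ℝ, IsGlobalCigarSolution α c φ ∧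
      ∀ ψ : ℝ → ℝ, IsGlobalCigarSolution α c ψ → Set.EqOn ψ φ (Set.Ici 0)) ∧
    (∀ φ : ℝ → ℝ, IsGlobalCigarSolution α c φ → ∀ s : ℝ, 0 < s →
      0 < φ s ∧ 0 < derivWithin φ (Set.Ici 0) s ∧
        derivWithin φ (Set.Ici 0) s ≤ 1) := by
  refine ⟨⟨profile α c, isGlobalCigarSolution_profile hα hc,
    fun ψ hψ => hψ.eqOn_profile hα hc⟩, fun φ hφ s hs => ?_⟩
  rw [hφ.derivWithin_eq_V hα hc hs.le, hφ.eqOn_profile hα hc hs.le]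
  refine ⟨?_, V_pos hα hc (profile_mem hα hc s),
    V_le_one hα hc (profile_mem_Ioo_uMax hα hc s)⟩
  simpa [profile_zero hα hc] using strictMono_profile hα hc hs
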